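/- arXiv:1804.01351 — 3 statements merged into one kernel-verified Lean document; each statement's English description precedes it below -/
import Mathlib

section
/- Under the equal load redistribution cascade model, the final set of failed lines depends only on the set A of initially attacked lines and not on the order in which the lines in A are attacked. Formally, if starting from attack set A the cascade process (repeatedly failing every alive line whose free space is at most the total failed load divided by the number of alive lines) is run to steady state, the resulting failed set equals the failed set obtained by attacking the lines of A one at a time in any order, letting cascades settle between attacks. -/
/-!
Since loads are nonnegative, the load per alive line `(∑ j ∈ F, L j) / (N - #F)` grows with the
failed set `F`, so one cascade step is monotone; being also inflationary on subsets of a set of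
size `N`, after `N` steps it sits at its least fixed point above the attack set. Hence the cascade
is a closure operator `c`, and `c (insert a (c F) ∪ B) = c (insert a F ∪ B)` says that letting a
cascade settle between two attacks changes nothing. The empty set is closed because all free
spaces are positive, so attacking one line at a time from scratch ends at `c A`.
-/
open Finset
open scoped Classical

/-- One step of the equal load redistribution cascade: every alive line whose
free space is at most the total failed load divided by the number of alive lines fails. -/
noncomputable def step {N : ℕ} (L S : Fin N → ℝ) (F : Finset (Fin N)) : Finset (Fin N) :=
  F ∪ Finset.univ.filter (fun i => S i ≤ (∑ j ∈ F, L j) / ((N : ℝ) - F.card))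

/-- The steady state (final failed set) of the cascade initiated by attack set `A`. -/
noncomputable def cascade {N : ℕ} (L S : Fin N → ℝ) (A : Finset (Fin N)) : Finset (Fin N) :=
  (step L S)^[N] A

open Function

theorem Finset.isFixedPt_or_le_card_iterate {α : Type*} [DecidableEq α]
    {f : Finset α → Finset α} (hf : ∀ s, s ⊆ f s) (s : Finset α) (k : ℕ) :
    IsFixedPt f (f^[k] s) ∨ k ≤ #(f^[k] s) := by
  induction k with
  | zero => exact Or.inr (Nat.zero_le _)
  | succ k ih =>
    rw [iterate_succ_apply']
    by_cases hfix : IsFixedPt f (f^[k] s)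
    · left
      rw [hfix.eq]
      exact hfix
    · right
      have hlt : f^[k] s ⊂ f (f^[k] s) := (hf _).ssubset_of_ne (Ne.symm hfix)
      exact (ih.resolve_left hfix).trans_lt (card_lt_card hlt)

theorem Finset.isFixedPt_iterate_card {α : Type*} [Fintype α] [DecidableEq α]
    {f : Finset α → Finset α} (hf : ∀ s, s ⊆ f s) (s : Finset α) :
    IsFixedPt f (f^[Fintype.card α] s) := by
  rcases isFixedPt_or_le_card_iterate hf s (Fintype.card α) with hfix | hcard
  · exact hfix
  rw [eq_univ_of_card _ (hcard.antisymm' (card_le_univ _))]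
  exact (subset_univ _).antisymm (hf univ)

section Cascade

variable {N : ℕ} {L S : Fin N → ℝ}

theorem subset_step (F : Finset (Fin N)) : F ⊆ step L S F :=
  subset_union_left

theorem step_mono (hL : ∀ i, 0 ≤ L i) : Monotone (step L S) := by
  intro F G hFG i hi
  rcases mem_union.1 hi with hiF | hiS
  · exact subset_step G (hFG hiF)
  by_cases hG : G = univ
  · exact hG ▸ subset_step univ (mem_univ i)
  have hGcard : (#G : ℝ) < N := by
    exact_mod_cast (card_lt_card (ssubset_univ_iff.2 hG)).trans_eq (card_fin N)
  have hFG_card : (#F : ℝ) ≤ #G := by exact_mod_cast card_le_card hFG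
  have hload : (∑ j ∈ F, L j) / ((N : ℝ) - #F) ≤ (∑ j ∈ G, L j) / ((N : ℝ) - #G) :=
    div_le_div₀ (sum_nonneg fun j _ => hL j)
      (sum_le_sum_of_subset_of_nonneg hFG fun j _ _ => hL j) (by linarith) (by linarith)
  exact mem_union_right _ (mem_filter.2 ⟨mem_univ i, (mem_filter.1 hiS).2.trans hload⟩)

theorem step_empty (hS : ∀ i, 0 < S i) : step L S ∅ = ∅ := by
  simp only [step, empty_union, sum_empty, zero_div]
  exact filter_false_of_mem fun i _ => not_le.2 (hS i)

theorem isFixedPt_cascade (A : Finset (Fin N)) : IsFixedPt (step L S) (cascade L S A) := by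
  have hfix := isFixedPt_iterate_card (f := step L S) subset_step A
  rwa [Fintype.card_fin] at hfix

theorem subset_cascade (A : Finset (Fin N)) : A ⊆ cascade L S A :=
  id_le_iterate_of_id_le subset_step N A

theorem cascade_subset_of_isFixedPt (hL : ∀ i, 0 ≤ L i) {A F : Finset (Fin N)}
    (hAF : A ⊆ F) (hF : IsFixedPt (step L S) F) : cascade L S A ⊆ F :=
  (iterate_fixed hF N).le.trans' ((step_mono hL).iterate N hAF)

noncomputable def cascadeClosure (S : Fin N → ℝ) (hL : ∀ i, 0 ≤ L i) :
    ClosureOperator (Finset (Fin N)) :=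
  .ofPred (cascade L S) (IsFixedPt (step L S)) subset_cascade isFixedPt_cascade
    fun _ _ => cascade_subset_of_isFixedPt hL

end Cascade

theorem ClosureOperator.foldl_insert {α : Type*} [DecidableEq α]
    (c : ClosureOperator (Finset α)) (l : List α) {F : Finset α} (hF : c.IsClosed F) :
    l.foldl (fun F a => c (insert a F)) F = c (F ∪ l.toFinset) := by
  induction l generalizing F with
  | nil => simp [hF.closure_eq]
  | cons a l ih =>
    rw [List.foldl_cons, ih (c.isClosed_closure _), ← sup_eq_union, c.closure_sup_closure_left,
      List.toFinset_cons, sup_eq_union, insert_union, union_insert]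

theorem order_of_attack_irrelevant_general {N : ℕ} (L C : Fin N → ℝ)
    (hL : ∀ i, 0 < L i) (hC : ∀ i, L i < C i)
    (l : List (Fin N)) :
    l.foldl (fun F a => cascade L (fun i => C i - L i) (insert a F)) ∅
      = cascade L (fun i => C i - L i) l.toFinset := by
  have hclosed : (cascadeClosure (fun i => C i - L i) fun i => (hL i).le).IsClosed ∅ :=
    step_empty fun i => sub_pos.2 (hC i)
  exact (cascadeClosure _ _).foldl_insert l hclosed

/-- The final failed set depends only on the attack set, not on the order of attack:
attacking the lines of `l` one at a time (letting cascades settle in between)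
yields the same failed set as attacking `l.toFinset` at once. -/
theorem order_of_attack_irrelevant {N : ℕ} (L C : Fin N → ℝ)
    (hL : ∀ i, 0 < L i) (hC : ∀ i, L i < C i)
    (l : List (Fin N)) (hl : l.Nodup) :
    l.foldl (fun F a => cascade L (fun i => C i - L i) (insert a F)) ∅
      = cascade L (fun i => C i - L i) l.toFinset :=
  order_of_attack_irrelevant_general L C hL hC l
end

section
/- Suppose all lines have the same free space, i.e., S_i = S > 0 for every i. Then attacking a set A with |A| = k and k < N produces no intermediate cascade: either the entire system fails, which happens if and only if sum_{i in A} L_i >= (N - k) * S, or no line outside A fails, i.e., n_∞(A) = N - k. -/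
open Finset
open scoped Classical

/-! With a common free space every alive line sees the same threshold, so the first
step of the cascade fails either all lines or none: it reaches `univ` or stays at `A`,
and both are fixed points of `step`. -/

section Cascade

variable {N : ℕ} (L S : Fin N → ℝ)

theorem step_univ : step L S univ = univ :=
  union_eq_left.mpr (subset_univ _)

variable {L S}

theorem step_eq_univ_of_forall_le {F : Finset (Fin N)}
    (h : ∀ i, S i ≤ (∑ j ∈ F, L j) / ((N : ℝ) - F.card)) : step L S F = univ := by
  rw [step, filter_true_of_mem fun i _ => h i]
  exact union_eq_right.mpr (subset_univ F)

theorem step_eq_self_of_forall_lt {F : Finset (Fin N)}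
    (h : ∀ i, (∑ j ∈ F, L j) / ((N : ℝ) - F.card) < S i) : step L S F = F := by
  rw [step, filter_false_of_mem fun i _ => not_le.mpr (h i), union_empty]

theorem cascade_eq_univ_of_step_eq_univ {A : Finset (Fin N)} (hN : N ≠ 0)
    (h : step L S A = univ) : cascade L S A = univ := by
  obtain ⟨n, rfl⟩ := Nat.exists_eq_succ_of_ne_zero hN
  rw [cascade, Function.iterate_succ_apply, h, Function.iterate_fixed (step_univ L S)]

theorem cascade_eq_self_of_step_eq_self {A : Finset (Fin N)} (h : step L S A = A) :
    cascade L S A = A :=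
  Function.iterate_fixed h N

end Cascade

theorem same_free_space_no_intermediate_cascade_general {N : ℕ} (L : Fin N → ℝ) (S : ℝ)
    (A : Finset (Fin N)) (k : ℕ) (hA : A.card = k) (hk : k < N) :
    (cascade L (fun _ => S) A = Finset.univ ↔ ((N : ℝ) - k) * S ≤ ∑ i ∈ A, L i) ∧
    (¬ (((N : ℝ) - k) * S ≤ ∑ i ∈ A, L i) → cascade L (fun _ => S) A = A) := by
  have hNk : (0 : ℝ) < N - A.card := by
    rw [hA, sub_pos]
    exact_mod_cast hk
  by_cases h : ((N : ℝ) - k) * S ≤ ∑ i ∈ A, L i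
  · have hstep : step L (fun _ => S) A = univ :=
      step_eq_univ_of_forall_le fun _ => by rwa [le_div_iff₀ hNk, hA, mul_comm]
    exact ⟨iff_of_true (cascade_eq_univ_of_step_eq_univ (by omega) hstep) h,
      fun hn => absurd h hn⟩
  · have hcas : cascade L (fun _ => S) A = A :=
      cascade_eq_self_of_step_eq_self <| step_eq_self_of_forall_lt fun _ => by
        rw [div_lt_iff₀ hNk, hA, mul_comm]
        exact not_le.mp h
    have hA_ne_univ : A ≠ univ := fun hu => by
      have : A.card = N := by rw [hu, card_univ, Fintype.card_fin]
      omega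
    rw [hcas]
    exact ⟨iff_of_false hA_ne_univ h, fun _ => rfl⟩

/-- With a common free space `S`, attacking a set `A` of `k < N` lines produces no
intermediate cascade: the whole system fails iff the attacked load is at least
`(N-k)*S`, and otherwise no line outside `A` fails. -/
theorem same_free_space_no_intermediate_cascade {N : ℕ} (L : Fin N → ℝ) (S : ℝ)
    (hL : ∀ i, 0 < L i) (hS : 0 < S)
    (A : Finset (Fin N)) (k : ℕ) (hA : A.card = k) (hk : k < N) :
    (cascade L (fun _ => S) A = Finset.univ ↔ ((N : ℝ) - k) * S ≤ ∑ i ∈ A, L i) ∧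
    (¬ (((N : ℝ) - k) * S ≤ ∑ i ∈ A, L i) → cascade L (fun _ => S) A = A) :=
  same_free_space_no_intermediate_cascade_general L S A k hA hk
end

section
/- Steady-state fixed-point characterization: for an attack set A, define the map on nonnegative reals T(x) = ( sum_{i in A} L_i + sum_{i ∉ A, S_i <= x} L_i ) / ( number of i ∉ A with S_i > x ), defined whenever the denominator is positive. Then the cascade from A terminates with alive set {i ∉ A : S_i > x*}, where x* is the smallest nonnegative value satisfying T(x*) <= x* (the least fixed point of the load-redistribution map); if no such x* exists then all lines fail. -/
/-!
The cascade is the least set containing `A` that is closed under the monotone, inflationary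
map `step`, and it is reached after at most `N` rounds. For every `x ≥ 0` with `T x ≤ x`, the
set `A ∪ {i | S i ≤ x}` is closed, so it contains the cascade. Conversely, if some line
survives, the final failed set is exactly `A ∪ {i | S i ≤ y}` for `y` its own load share, and
`T y = y`. So the final failed set corresponds to the least `x` with `T x ≤ x`.
-/

open Finset
open scoped Classical

theorem Finset.iterate_fixed_or_le_card {α : Type*} {f : Finset α → Finset α}
    (hf : ∀ s, s ⊆ f s) (s : Finset α) (k : ℕ) :
    f (f^[k] s) = f^[k] s ∨ k ≤ #(f^[k] s) := by
  induction k with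
  | zero => exact Or.inr (Nat.zero_le _)
  | succ k ih =>
    rw [Function.iterate_succ_apply']
    by_cases hfix : f (f^[k] s) = f^[k] s
    · exact Or.inl (by rw [hfix, hfix])
    · have hgrow := card_lt_card ((hf _).ssubset_of_ne (Ne.symm hfix))
      exact Or.inr (by rcases ih with ih | ih <;> [exact absurd ih hfix; omega])

theorem Finset.map_iterate_card_eq {α : Type*} [Fintype α] {f : Finset α → Finset α}
    (hf : ∀ s, s ⊆ f s) (s : Finset α) :
    f (f^[Fintype.card α] s) = f^[Fintype.card α] s := by
  rcases iterate_fixed_or_le_card hf s (Fintype.card α) with hfix | hcard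
  · exact hfix
  · rw [eq_univ_of_card _ (le_antisymm (card_le_univ _) hcard)]
    exact (subset_univ _).antisymm (hf _)

theorem Monotone.iterate_le_of_map_le_of_le {α : Type*} [Preorder α] {f : α → α}
    (hf : Monotone f) {a b : α} (hb : f b ≤ b) (hab : a ≤ b) (n : ℕ) : f^[n] a ≤ b := by
  induction n with
  | zero => exact hab
  | succ n ih =>
    rw [Function.iterate_succ_apply']
    exact (hf ih).trans hb

namespace Cascade

variable {N : ℕ} (L S : Fin N → ℝ)

/-- The extra load per alive line once the lines in `F` have failed (`0` if all have failed). -/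
noncomputable def loadShare (F : Finset (Fin N)) : ℝ := (∑ j ∈ F, L j) / ((N : ℝ) - #F)

theorem step_eq (F : Finset (Fin N)) :
    step L S F = F ∪ univ.filter (fun i => S i ≤ loadShare L F) := rfl

theorem subset_step (F : Finset (Fin N)) : F ⊆ step L S F := subset_union_left

variable {L} in
theorem loadShare_nonneg (hL : ∀ i, 0 ≤ L i) {F : Finset (Fin N)} (hF : #F < N) :
    0 ≤ loadShare L F := by
  have : (#F : ℝ) < N := by exact_mod_cast hF
  exact div_nonneg (sum_nonneg fun i _ => hL i) (by linarith)

variable {L} in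
theorem loadShare_mono (hL : ∀ i, 0 ≤ L i) {F F' : Finset (Fin N)} (hFF' : F ⊆ F')
    (hF' : #F' < N) : loadShare L F ≤ loadShare L F' := by
  have hlt : (#F' : ℝ) < N := by exact_mod_cast hF'
  have hle : (#F : ℝ) ≤ #F' := by exact_mod_cast card_le_card hFF'
  exact div_le_div₀ (sum_nonneg fun i _ => hL i)
    (sum_le_sum_of_subset_of_nonneg hFF' fun i _ _ => hL i) (by linarith) (by linarith)

variable {L} in
theorem step_mono (hL : ∀ i, 0 ≤ L i) : Monotone (step L S) := by
  intro F F' hFF'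
  rcases lt_or_ge #F' N with hF' | hF'
  · rw [step_eq, step_eq]
    refine union_subset_union hFF' (monotone_filter_right _ fun i _ hi => ?_)
    exact hi.trans (loadShare_mono hL hFF' hF')
  · have hcard : #F' = N := le_antisymm (by simpa using card_le_univ F') hF'
    rw [eq_univ_of_card F' (by simpa using hcard)]
    exact (subset_univ _).trans (subset_step L S univ)

theorem step_cascade (A : Finset (Fin N)) : step L S (cascade L S A) = cascade L S A := by
  have := map_iterate_card_eq (subset_step L S) A
  rwa [Fintype.card_fin] at this

theorem subset_cascade (A : Finset (Fin N)) : A ⊆ cascade L S A :=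
  Function.id_le_iterate_of_id_le (subset_step L S) N A

variable {L S} in
theorem cascade_subset_of_step_subset (hL : ∀ i, 0 ≤ L i) {A G : Finset (Fin N)}
    (hG : step L S G ⊆ G) (hAG : A ⊆ G) : cascade L S A ⊆ G :=
  (step_mono S hL).iterate_le_of_map_le_of_le hG hAG N

/-- The lines that have failed when the survivors carry extra load `x`. -/
noncomputable def failedAt (A : Finset (Fin N)) (x : ℝ) : Finset (Fin N) :=
  univ.filter (fun i => i ∈ A ∨ S i ≤ x)

variable {S} in
theorem mem_failedAt {A : Finset (Fin N)} {x : ℝ} {i : Fin N} :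
    i ∈ failedAt S A x ↔ i ∈ A ∨ S i ≤ x := by
  simp [failedAt]

theorem subset_failedAt (A : Finset (Fin N)) (x : ℝ) : A ⊆ failedAt S A x :=
  fun _ hi => mem_failedAt.2 (Or.inl hi)

theorem failedAt_mono (A : Finset (Fin N)) : Monotone (failedAt S A) :=
  fun _ _ hxy _ hi => mem_failedAt.2 ((mem_failedAt.1 hi).imp_right (·.trans hxy))

theorem compl_failedAt (A : Finset (Fin N)) (x : ℝ) :
    univ \ failedAt S A x = univ.filter (fun i => i ∉ A ∧ x < S i) := by
  ext i
  simp [mem_failedAt]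

theorem loadShare_failedAt (A : Finset (Fin N)) (x : ℝ) :
    loadShare L (failedAt S A x) =
      ((∑ i ∈ A, L i) + ∑ i ∈ univ.filter (fun i => i ∉ A ∧ S i ≤ x), L i) /
        (#(univ.filter (fun i => i ∉ A ∧ x < S i)) : ℝ) := by
  have hsplit : failedAt S A x = A ∪ univ.filter (fun i => i ∉ A ∧ S i ≤ x) := by
    ext i
    simp only [mem_failedAt, mem_union, mem_filter, mem_univ, true_and]
    tauto
  have hdisj : Disjoint A (univ.filter (fun i => i ∉ A ∧ S i ≤ x)) :=
    disjoint_left.2 fun _ hi hi' => (mem_filter.1 hi').2.1 hi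
  have hcard : (N : ℝ) - #(failedAt S A x) = #(univ \ failedAt S A x) := by
    rw [card_univ_sdiff, Fintype.card_fin,
      Nat.cast_sub (by simpa using card_le_univ (failedAt S A x))]
  rw [loadShare, hcard, compl_failedAt, hsplit, sum_union hdisj]

theorem step_failedAt_subset {A : Finset (Fin N)} {x : ℝ}
    (hx : loadShare L (failedAt S A x) ≤ x) : step L S (failedAt S A x) ⊆ failedAt S A x := by
  rw [step_eq]
  exact union_subset Subset.rfl fun _ hi => mem_failedAt.2 (Or.inr ((mem_filter.1 hi).2.trans hx))

variable {L S} in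
theorem cascade_eq_failedAt_loadShare (hL : ∀ i, 0 ≤ L i) {A : Finset (Fin N)}
    (hC : cascade L S A ≠ univ) :
    cascade L S A = failedAt S A (loadShare L (cascade L S A)) := by
  set C := cascade L S A
  have hCN : #C < N := by simpa using card_lt_card ((subset_univ C).ssubset_of_ne hC)
  refine Subset.antisymm ?_ fun i hi => ?_
  · -- `C ∩ failedAt …` is closed: shrinking the failed set only lowers its load share.
    set G := C ∩ failedAt S A (loadShare L C)
    have hG : step L S G ⊆ G := by
      refine subset_inter ((step_mono S hL inter_subset_left).trans (step_cascade L S A).le) ?_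
      refine union_subset inter_subset_right fun i hi => mem_failedAt.2 (Or.inr ?_)
      exact (mem_filter.1 hi).2.trans (loadShare_mono hL inter_subset_left hCN)
    exact (cascade_subset_of_step_subset hL hG
      (subset_inter (subset_cascade L S A) (subset_failedAt S A _))).trans inter_subset_right
  · rcases mem_failedAt.1 hi with hA | hSi
    · exact subset_cascade L S A hA
    · exact (step_cascade L S A).le (mem_union_right _ (mem_filter.2 ⟨mem_univ i, hSi⟩))

/-- The condition on `x*` in the paper, whose `T x` is `loadShare L (failedAt S A x)`. -/
def IsSteadyLoad (A : Finset (Fin N)) (x : ℝ) : Prop :=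
  0 ≤ x ∧ (univ \ failedAt S A x).Nonempty ∧ loadShare L (failedAt S A x) ≤ x

theorem isSteadyLoad_iff (A : Finset (Fin N)) (x : ℝ) :
    IsSteadyLoad L S A x ↔ 0 ≤ x ∧ 0 < #(univ.filter (fun i => i ∉ A ∧ x < S i)) ∧
      ((∑ i ∈ A, L i) + ∑ i ∈ univ.filter (fun i => i ∉ A ∧ S i ≤ x), L i) /
        (#(univ.filter (fun i => i ∉ A ∧ x < S i)) : ℝ) ≤ x := by
  rw [IsSteadyLoad, loadShare_failedAt, compl_failedAt, card_pos]

variable {L S} in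
theorem exists_isSteadyLoad_of_cascade_ne_univ (hL : ∀ i, 0 ≤ L i) {A : Finset (Fin N)}
    (hC : cascade L S A ≠ univ) :
    ∃ y, IsSteadyLoad L S A y ∧ cascade L S A = failedAt S A y := by
  have hCy := cascade_eq_failedAt_loadShare hL hC
  have hCN : #(cascade L S A) < N := by
    simpa using card_lt_card ((subset_univ _).ssubset_of_ne hC)
  refine ⟨_, ⟨loadShare_nonneg hL hCN, ?_, ?_⟩, hCy⟩
  · rw [← hCy, sdiff_nonempty]
    exact fun h => hC (univ_subset_iff.1 h)
  · rw [← hCy]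

variable {L S} in
theorem cascade_eq_failedAt_of_isLeast (hL : ∀ i, 0 ≤ L i) {A : Finset (Fin N)} {x : ℝ}
    (hx : IsLeast {y | IsSteadyLoad L S A y} x) : cascade L S A = failedAt S A x := by
  obtain ⟨⟨-, hsurv, hTx⟩, hleast⟩ := hx
  have hCx : cascade L S A ⊆ failedAt S A x :=
    cascade_subset_of_step_subset hL (step_failedAt_subset L S hTx) (subset_failedAt S A x)
  have hC : cascade L S A ≠ univ := by
    intro hC
    rw [hC, univ_subset_iff] at hCx
    simp [hCx] at hsurv
  obtain ⟨y, hy, hCy⟩ := exists_isSteadyLoad_of_cascade_ne_univ hL hC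
  exact hCx.antisymm (hCy ▸ failedAt_mono S A (hleast hy))

end Cascade

open Cascade

theorem steady_state_fixed_point_general {N : ℕ} (L S : Fin N → ℝ)
    (hL : ∀ i, 0 < L i) (A : Finset (Fin N)) :
    (∀ x : ℝ, 0 ≤ x →
      0 < (Finset.univ.filter (fun i => i ∉ A ∧ x < S i)).card →
      ((∑ i ∈ A, L i) + ∑ i ∈ Finset.univ.filter (fun i => i ∉ A ∧ S i ≤ x), L i) /
          ((Finset.univ.filter (fun i => i ∉ A ∧ x < S i)).card : ℝ) ≤ x →
      (∀ y : ℝ, 0 ≤ y → y < x →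
        ¬ (0 < (Finset.univ.filter (fun i => i ∉ A ∧ y < S i)).card ∧
          ((∑ i ∈ A, L i) + ∑ i ∈ Finset.univ.filter (fun i => i ∉ A ∧ S i ≤ y), L i) /
            ((Finset.univ.filter (fun i => i ∉ A ∧ y < S i)).card : ℝ) ≤ y)) →
      Finset.univ \ cascade L S A = Finset.univ.filter (fun i => i ∉ A ∧ x < S i)) ∧
    ((¬ ∃ x : ℝ, 0 ≤ x ∧
        0 < (Finset.univ.filter (fun i => i ∉ A ∧ x < S i)).card ∧
        ((∑ i ∈ A, L i) + ∑ i ∈ Finset.univ.filter (fun i => i ∉ A ∧ S i ≤ x), L i) /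
          ((Finset.univ.filter (fun i => i ∉ A ∧ x < S i)).card : ℝ) ≤ x) →
      cascade L S A = Finset.univ) := by
  have hL' : ∀ i, 0 ≤ L i := fun i => (hL i).le
  refine ⟨fun x hx0 hpos hTx hbelow => ?_, fun hnone => ?_⟩
  · have hleast : IsLeast {y | IsSteadyLoad L S A y} x := by
      refine ⟨(isSteadyLoad_iff L S A x).2 ⟨hx0, hpos, hTx⟩, fun y hy => ?_⟩
      obtain ⟨hy0, hy⟩ := (isSteadyLoad_iff L S A y).1 hy
      exact not_lt.1 fun hyx => hbelow y hy0 hyx hy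
    rw [cascade_eq_failedAt_of_isLeast hL' hleast, compl_failedAt]
  · by_contra hC
    obtain ⟨y, hy, -⟩ := exists_isSteadyLoad_of_cascade_ne_univ hL' hC
    exact hnone ⟨y, (isSteadyLoad_iff L S A y).1 hy⟩

/-- Fixed-point characterization of the steady state: with
`T(x) = (attacked load + load of non-attacked lines with S ≤ x) / #{non-attacked with S > x}`,
if `x*` is the least nonnegative point with `T(x*) ≤ x*` then the alive set is
`{i ∉ A : S i > x*}`; if no such point exists, all lines fail. -/
theorem steady_state_fixed_point {N : ℕ} (L S : Fin N → ℝ)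
    (hL : ∀ i, 0 < L i) (hS : ∀ i, 0 < S i) (A : Finset (Fin N)) :
    (∀ x : ℝ, 0 ≤ x →
      0 < (Finset.univ.filter (fun i => i ∉ A ∧ x < S i)).card →
      ((∑ i ∈ A, L i) + ∑ i ∈ Finset.univ.filter (fun i => i ∉ A ∧ S i ≤ x), L i) /
          ((Finset.univ.filter (fun i => i ∉ A ∧ x < S i)).card : ℝ) ≤ x →
      (∀ y : ℝ, 0 ≤ y → y < x →
        ¬ (0 < (Finset.univ.filter (fun i => i ∉ A ∧ y < S i)).card ∧
          ((∑ i ∈ A, L i) + ∑ i ∈ Finset.univ.filter (fun i => i ∉ A ∧ S i ≤ y), L i) /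
            ((Finset.univ.filter (fun i => i ∉ A ∧ y < S i)).card : ℝ) ≤ y)) →
      Finset.univ \ cascade L S A = Finset.univ.filter (fun i => i ∉ A ∧ x < S i)) ∧
    ((¬ ∃ x : ℝ, 0 ≤ x ∧
        0 < (Finset.univ.filter (fun i => i ∉ A ∧ x < S i)).card ∧
        ((∑ i ∈ A, L i) + ∑ i ∈ Finset.univ.filter (fun i => i ∉ A ∧ S i ≤ x), L i) /
          ((Finset.univ.filter (fun i => i ∉ A ∧ x < S i)).card : ℝ) ≤ x) →
      cascade L S A = Finset.univ) :=
  steady_state_fixed_point_general L S hL A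
end
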